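/- Let w ≥ 1 and z be natural numbers. Let B be a finite set, π : B → Fin w a map each of whose fibers has at least 3 elements, P ⊆ B a subset with |P| = z, and σ a fixed-point-free involution on B \ P, so that |B \ P| = 2ρ for a natural number ρ. Suppose moreover there is an exact sequence of finite-dimensional ℚ-vector spaces ℚ^l → ℚ^ρ → ℚ^w → ℚ → 0 (exact at the second, third and fourth terms, the last arrow being surjective). Then w ≤ 2l + z − 2. -/
import Mathlib


/-- Master inequality of Section 7.  Let `w ≥ 1` and `z` be natural numbers,
`B` a finite set, `π : B → Fin w` a map each of whose fibers has at least `3`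
elements, `P ⊆ B` with `|P| = z`, and `σ` a fixed-point-free involution on
`B \ P`, so that `|B \ P| = 2ρ`.  Suppose moreover that there is an exact
sequence of finite-dimensional `ℚ`-vector spaces
`ℚ^l → ℚ^ρ → ℚ^w → ℚ → 0` (exact at the second, third and fourth terms, the
last arrow being surjective).  Then `w ≤ 2l + z - 2`. -/
theorem master_pieces_bound
    (w z ρ l : ℕ) (hw : 1 ≤ w)
    (B : Type*) [Fintype B] [DecidableEq B]
    (π : B → Fin w)
    (hfib : ∀ i : Fin w, 3 ≤ (Finset.univ.filter fun b => π b = i).card)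
    (P : Finset B) (hP : P.card = z)
    (σ : B → B)
    (hσmem : ∀ b, b ∉ P → σ b ∉ P)
    (hσinv : ∀ b, b ∉ P → σ (σ b) = b)
    (hσff : ∀ b, b ∉ P → σ b ≠ b)
    (hρ : (Finset.univ \ P).card = 2 * ρ)
    (f : (Fin l → ℚ) →ₗ[ℚ] (Fin ρ → ℚ))
    (g : (Fin ρ → ℚ) →ₗ[ℚ] (Fin w → ℚ))
    (h : (Fin w → ℚ) →ₗ[ℚ] ℚ)
    (exact₂ : LinearMap.range f = LinearMap.ker g)
    (exact₃ : LinearMap.range g = LinearMap.ker h)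
    (exact₄ : Function.Surjective h) :
    (w : ℤ) ≤ 2 * (l : ℤ) + (z : ℤ) - 2 := by
  classical
  -- Combinatorics: card B = z + 2ρ and 3w ≤ card B
  have hz : z ≤ Fintype.card B := by
    rw [← hP, ← Finset.card_univ]; exact Finset.card_le_card (Finset.subset_univ P)
  have hcard : Fintype.card B = z + 2 * ρ := by
    have := Finset.card_sdiff_of_subset (Finset.subset_univ P)
    rw [hρ, hP, Finset.card_univ] at this
    omega
  have h3w : 3 * w ≤ Fintype.card B := by
    have hsum := Finset.card_eq_sum_card_fiberwise
      (s := (Finset.univ : Finset B)) (t := (Finset.univ : Finset (Fin w))) (f := π)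
      (fun x _ => Finset.mem_univ _)
    calc 3 * w = ∑ _i : Fin w, 3 := by simp [mul_comm]
      _ ≤ ∑ i : Fin w, (Finset.univ.filter fun b => π b = i).card :=
          Finset.sum_le_sum fun i _ => hfib i
      _ = Fintype.card B := by rw [← hsum, Finset.card_univ]
  -- Linear algebra
  have hrkh : 1 + Module.finrank ℚ (LinearMap.ker h) = w := by
    have := LinearMap.finrank_range_add_finrank_ker h
    rw [LinearMap.range_eq_top.2 exact₄] at this
    simpa [Module.finrank_pi] using this
  have hrkg : Module.finrank ℚ (LinearMap.ker h) + Module.finrank ℚ (LinearMap.ker g) = ρ := by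
    have := LinearMap.finrank_range_add_finrank_ker g
    rw [exact₃] at this
    simpa [Module.finrank_pi] using this
  have hrkf : Module.finrank ℚ (LinearMap.ker g) ≤ l := by
    rw [← exact₂]
    have := LinearMap.finrank_range_le f
    simpa [Module.finrank_pi] using this
  omega
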